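/- The group G = ⟨α, β, γ, δ | αγδ = γδα, βγδ = γδβ, γαβ = αβγ, δαβ = αβδ⟩ is not abelian. -/
import Mathlib


/-- The relations of the group `⟨α, β, γ, δ | αγδ = γδα, βγδ = γδβ, γαβ = αβγ, δαβ = αβδ⟩`,
written as words in the free group on four generators that are set equal to 1. -/
def linkComplementRels : Set (FreeGroup (Fin 4)) :=
  let a := FreeGroup.of (0 : Fin 4)
  let b := FreeGroup.of (1 : Fin 4)
  let c := FreeGroup.of (2 : Fin 4)
  let d := FreeGroup.of (3 : Fin 4)
  {a * c * d * (c * d * a)⁻¹, b * c * d * (c * d * b)⁻¹,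
   c * a * b * (a * b * c)⁻¹, d * a * b * (a * b * d)⁻¹}

private def lcf : Fin 4 → Equiv.Perm (Fin 3) :=
  ![Equiv.swap 0 1, Equiv.swap 0 1, Equiv.swap 0 2, Equiv.swap 0 2]

private lemma lcf_rels : ∀ r ∈ linkComplementRels, FreeGroup.lift lcf r = 1 := by
  intro r hr
  simp only [linkComplementRels, Set.mem_insert_iff, Set.mem_singleton_iff] at hr
  rcases hr with h | h | h | h <;> subst h <;>
    simp only [map_mul, map_inv, FreeGroup.lift_apply_of, lcf] <;> decide

/-- The group `⟨α, β, γ, δ | αγδ = γδα, βγδ = γδβ, γαβ = αβγ, δαβ = αβδ⟩`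
is not abelian. -/
theorem link_complement_group_not_abelian :
    ∃ x y : PresentedGroup linkComplementRels, x * y ≠ y * x := by
  refine ⟨PresentedGroup.of 0, PresentedGroup.of 2, fun h => ?_⟩
  have := congrArg (PresentedGroup.toGroup lcf_rels) h
  simp only [map_mul, PresentedGroup.toGroup.of, lcf] at this
  exact absurd this (by decide)
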